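/- arXiv:2507.06808 — 2 statements merged into one kernel-verified Lean document; each statement's English description precedes it below -/
import Mathlib

section
/- Let F_q be a finite field, G a subgroup of F_q^×, ψ a nontrivial additive character, and b ∈ F_q^×. Then |Σ_{x ∈ G} ψ(b·x)| ≤ |G|/(q−1) + (1 − |G|/(q−1)) · q^(1/2). -/
open scoped Classical BigOperators

/-! The multiplicative characters of `Fˣ` that are trivial on `G` form a group of order
`d = [Fˣ : G]`, and summing them at `u` gives `d` times the indicator of `G`. Hence
`d · ∑_{x ∈ G} ψ (b x)` is the sum of the `d` Gauss sums `g(χ, ψ_b)` over these characters: the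
trivial one contributes `-1` and each of the other `d - 1` has absolute value `√q`. Dividing by
`d = (q - 1) / |G|` gives the bound. -/

theorem Fintype.sum_units_eq_sum {G₀ M : Type*} [GroupWithZero G₀] [Fintype G₀]
    [AddCommMonoid M] {f : G₀ → M} (hf : f 0 = 0) :
    ∑ u : G₀ˣ, f u = ∑ a, f a := by
  calc ∑ u : G₀ˣ, f u = ∑ a : {a : G₀ // a ≠ 0}, f a :=
        Fintype.sum_equiv unitsEquivNeZero _ _ fun _ => rfl
    _ = ∑ a ∈ Finset.univ.filter (· ≠ 0), f a := (Finset.sum_subtype _ (by simp) f).symm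
    _ = ∑ a, f a := Finset.sum_filter_of_ne fun a _ ha h => ha (h ▸ hf)

namespace MulChar

variable {M R : Type*} [CommMonoid M] [Finite M] [CommRing R] [IsDomain R]
  [HasEnoughRootsOfUnity R (Monoid.exponent Mˣ)]

theorem sum_subgroupOrderIsoSubgroupMulChar_apply (H : Subgroup Mˣ)
    [Fintype (subgroupOrderIsoSubgroupMulChar M R H).ofDual] (u : Mˣ) :
    ∑ χ : (subgroupOrderIsoSubgroupMulChar M R H).ofDual, (χ : MulChar M R) u =
      if u ∈ H then (H.index : R) else 0 := by
  split_ifs with hu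
  · have hH : ∀ χ : (subgroupOrderIsoSubgroupMulChar M R H).ofDual, (χ : MulChar M R) u = 1 :=
      fun χ => mem_subgroupOrderIsoSubgroupMulChar_iff.mp χ.2 u hu
    rw [Finset.sum_congr rfl fun χ _ => hH χ, Finset.sum_const, Finset.card_univ, nsmul_one,
      Fintype.card_eq_nat_card, card_subgroupOrderIsoSubgroupMulChar, Subgroup.index]
  · -- by duality `H` is the common kernel of its dual characters, so evaluating at `u` is
    -- a nontrivial homomorphism
    let evalAt : (subgroupOrderIsoSubgroupMulChar M R H).ofDual →* R :=
      { toFun χ := (χ : MulChar M R) u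
        map_one' := one_apply_coe u
        map_mul' χ χ' := congrFun (coeToFun_mul χ.1 χ'.1) u }
    refine sum_hom_units_eq_zero evalAt fun h => hu ?_
    simpa using (mem_subgroupOrderIsoSubgroupMulChar_symm_iff (m := u)).mpr
      fun χ hχ => DFunLike.congr_fun h ⟨χ, hχ⟩

end MulChar

theorem norm_gaussSum_eq_sqrt_card {F : Type*} [Field F] [Fintype F] {χ : MulChar F ℂ}
    (hχ : χ ≠ 1) {ψ : AddChar F ℂ} (hψ : ψ.IsPrimitive) :
    ‖gaussSum χ ψ‖ = √(Fintype.card F) := by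
  have h : (‖gaussSum χ ψ‖ ^ 2 : ℂ) = Fintype.card F := by
    rw [← Complex.mul_conj', starRingEnd_apply, star_gaussSum_eq]
    exact gaussSum_mul_gaussSum_eq_card hχ hψ
  rw [← Real.sqrt_sq (norm_nonneg _)]
  congr 1
  exact_mod_cast h

section FiniteField

variable {F : Type*} [Field F] [Fintype F]

theorem index_mul_sum_subgroup_eq_sum_gaussSum {R : Type*} [CommRing R] [IsDomain R]
    [HasEnoughRootsOfUnity R (Monoid.exponent Fˣ)] (G : Subgroup Fˣ)
    [Fintype (MulChar.subgroupOrderIsoSubgroupMulChar F R G).ofDual] (ψ : AddChar F R) :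
    (G.index : R) * ∑ x : G, ψ ((x : Fˣ) : F) =
      ∑ χ : (MulChar.subgroupOrderIsoSubgroupMulChar F R G).ofDual, gaussSum (χ : MulChar F R) ψ :=
  calc (G.index : R) * ∑ x : G, ψ ((x : Fˣ) : F)
    _ = ∑ u : Fˣ, if u ∈ G then (G.index : R) * ψ u else 0 := by
        rw [Finset.mul_sum, ← Finset.sum_filter]
        exact (Finset.sum_subtype (p := (· ∈ G)) _ (fun u => by simp)
          fun u => (G.index : R) * ψ u).symm
    _ = ∑ u : Fˣ, ∑ χ : (MulChar.subgroupOrderIsoSubgroupMulChar F R G).ofDual,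
          (χ : MulChar F R) u * ψ u := by
        simp only [← Finset.sum_mul, MulChar.sum_subgroupOrderIsoSubgroupMulChar_apply, ite_mul,
          zero_mul]
    _ = _ := by
        rw [Finset.sum_comm]
        exact Finset.sum_congr rfl fun χ _ =>
          Fintype.sum_units_eq_sum (f := fun a => (χ : MulChar F R) a * ψ a)
            (by rw [MulChar.map_zero, zero_mul])

theorem index_mul_norm_sum_subgroup_le (G : Subgroup Fˣ) {ψ : AddChar F ℂ} (hψ : ψ ≠ 1) :
    G.index * ‖∑ x : G, ψ ((x : Fˣ) : F)‖ ≤ 1 + (G.index - 1) * √(Fintype.card F) := by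
  let X := (MulChar.subgroupOrderIsoSubgroupMulChar F ℂ G).ofDual
  have : Fintype X := Fintype.ofFinite X
  have hnorm : ∀ χ ∈ (Finset.univ : Finset X).erase 1,
      ‖gaussSum (χ : MulChar F ℂ) ψ‖ = √(Fintype.card F) := fun χ hχ =>
    norm_gaussSum_eq_sqrt_card (by simpa using Finset.ne_of_mem_erase hχ)
      (AddChar.IsPrimitive.of_ne_one hψ)
  calc G.index * ‖∑ x : G, ψ ((x : Fˣ) : F)‖ = ‖∑ χ : X, gaussSum (χ : MulChar F ℂ) ψ‖ := by
        rw [← index_mul_sum_subgroup_eq_sum_gaussSum, norm_mul, Complex.norm_natCast]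
    _ ≤ ∑ χ : X, ‖gaussSum (χ : MulChar F ℂ) ψ‖ := norm_sum_le _ _
    _ = 1 + (G.index - 1) * √(Fintype.card F) := by
        have hcard : Fintype.card X = G.index :=
          Fintype.card_eq_nat_card.trans MulChar.card_subgroupOrderIsoSubgroupMulChar
        rw [← Finset.add_sum_erase _ _ (Finset.mem_univ 1), Finset.sum_congr rfl hnorm,
          Finset.sum_const, Finset.card_erase_of_mem (Finset.mem_univ 1), Finset.card_univ, hcard,
          nsmul_eq_mul, Nat.cast_pred (Nat.pos_of_ne_zero Subgroup.index_ne_zero_of_finite)]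
        simp [gaussSum_one_left hψ]

end FiniteField

theorem stmt6 (F : Type*) [Field F] [Fintype F] (q : ℕ) (hq : q = Fintype.card F)
    (G : Subgroup Fˣ) (ψ : AddChar F ℂ) (hψ : ψ ≠ 1) (b : F) (hb : b ≠ 0) :
    ‖∑ x : G, ψ (b * ((x : Fˣ) : F))‖
      ≤ (Nat.card G : ℝ) / ((q : ℝ) - 1)
        + (1 - (Nat.card G : ℝ) / ((q : ℝ) - 1)) * Real.sqrt q := by
  subst hq
  have hψb : ψ.mulShift b ≠ 1 :=
    (AddChar.mulShift_unit_eq_one_iff ψ (isUnit_iff_ne_zero.2 hb)).not.mpr hψ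
  have hbound := index_mul_norm_sum_subgroup_le G hψb
  have hindex : (0 : ℝ) < G.index := mod_cast Nat.pos_of_ne_zero Subgroup.index_ne_zero_of_finite
  have hcard : (Nat.card G : ℝ) * G.index = Fintype.card F - 1 := by
    rw [← Nat.cast_mul, Subgroup.card_mul_index, Nat.card_units, Nat.card_eq_fintype_card,
      Nat.cast_pred Fintype.card_pos]
  have hratio : (Nat.card G : ℝ) / (Fintype.card F - 1) = 1 / G.index := by
    rw [← hcard]
    field_simp
  rw [hratio, show 1 / (G.index : ℝ) + (1 - 1 / G.index) * √(Fintype.card F) =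
    (1 + (G.index - 1) * √(Fintype.card F)) / G.index by field_simp, le_div_iff₀ hindex, mul_comm]
  exact hbound
end

section
/- Let F_q be a finite field of characteristic p, and G a subgroup of F_q^×. There is no rational function h ∈ \bar{F_q}(x) such that a·x^((q−1)/|G|) + b·x^(−(q−1)/|G|) = h(x)^p − h(x) for a, b ∈ F_q^×. In particular the rational function (a·x^(2(q−1)/|G|) + b)/x^((q−1)/|G|) is not of Artin–Schreier form h^p − h. -/
open scoped Classical

section Aux

variable {K : Type*} [Field K]

lemma myIntDegree_inv (x : RatFunc K) (hx : x ≠ 0) : x⁻¹.intDegree = -x.intDegree := by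
  have h := RatFunc.intDegree_mul hx (inv_ne_zero hx)
  rw [mul_inv_cancel₀ hx, RatFunc.intDegree_one] at h
  linarith

lemma myIntDegree_pow (x : RatFunc K) (hx : x ≠ 0) (m : ℕ) :
    (x ^ m).intDegree = m * x.intDegree := by
  induction m with
  | zero => simp
  | succ k ih =>
    rw [pow_succ, RatFunc.intDegree_mul (pow_ne_zero _ hx) hx, ih]
    push_cast; ring

lemma myIntDegree_add_left {x y : RatFunc K} (hx : x ≠ 0) (hy : y ≠ 0)
    (hlt : y.intDegree < x.intDegree) : (x + y).intDegree = x.intDegree := by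
  have hxy : x + y ≠ 0 := by
    intro h0
    have hx' : x = -y := eq_neg_of_add_eq_zero_left h0
    rw [hx', RatFunc.intDegree_neg] at hlt
    exact lt_irrefl _ hlt
  have h1 := RatFunc.intDegree_add_le hy hxy
  have h2 : x.intDegree ≤ max (x + y).intDegree (-y).intDegree := by
    have := RatFunc.intDegree_add_le (x := x + y) (neg_ne_zero.mpr hy)
      (by rw [add_neg_cancel_right]; exact hx)
    rwa [add_neg_cancel_right] at this
  rw [RatFunc.intDegree_neg] at h2
  rcases le_max_iff.mp h2 with h | h
  · exact le_antisymm (le_trans h1 (max_le le_rfl hlt.le)) h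
  · exact absurd h (not_le.mpr hlt)

end Aux

theorem stmt7 (F : Type*) [Field F] [Fintype F] (q p : ℕ) (hq : q = Fintype.card F)
    (hp : p = ringChar F) (G : Subgroup Fˣ) (a b : F) (ha : a ≠ 0) (hb : b ≠ 0) :
    ¬ ∃ h : RatFunc (AlgebraicClosure F),
      RatFunc.C (algebraMap F (AlgebraicClosure F) a) * RatFunc.X ^ ((q - 1) / Nat.card G)
        + RatFunc.C (algebraMap F (AlgebraicClosure F) b)
            * (RatFunc.X ^ ((q - 1) / Nat.card G))⁻¹
        = h ^ p - h := by
  rintro ⟨h, hEq⟩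
  set K := AlgebraicClosure F with hK
  haveI : CharP F p := by rw [hp]; exact ringChar.charP F
  have hpp : p.Prime := CharP.char_is_prime F p
  obtain ⟨k, -, hcard⟩ := FiniteField.card F p
  have hq1 : 1 < q := by rw [hq]; exact Fintype.one_lt_card
  have hpq : p ∣ q := by
    rw [hq, hcard]; exact dvd_pow_self p (by exact_mod_cast k.pos.ne')
  set n : ℕ := (q - 1) / Nat.card G with hn_def
  have hGdvd : Nat.card G ∣ q - 1 := by
    simpa [Nat.card_eq_fintype_card, Fintype.card_units, ← hq] using
      Subgroup.card_subgroup_dvd_card G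
  have hGpos : 0 < Nat.card G := Nat.card_pos
  have hnpos : 0 < n := Nat.div_pos (Nat.le_of_dvd (by omega) hGdvd) hGpos
  have hndvd : n ∣ q - 1 := Nat.div_dvd_of_dvd hGdvd
  have hpn : ¬ p ∣ n := by
    intro hd
    have h1 : p ∣ q - 1 := hd.trans hndvd
    have h2 : p ∣ 1 := by
      have := Nat.dvd_sub hpq h1
      rwa [Nat.sub_sub_self (by omega)] at this
    exact hpp.one_lt.ne' (Nat.dvd_one.mp h2)
  -- notation for the two terms
  have ha' : algebraMap F K a ≠ 0 := by simpa using ha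
  have hb' : algebraMap F K b ≠ 0 := by simpa using hb
  have hCa : RatFunc.C (algebraMap F K a) ≠ 0 := by
    simpa using ha'
  have hCb : RatFunc.C (algebraMap F K b) ≠ 0 := by
    simpa using hb'
  have hXn : (RatFunc.X : RatFunc K) ^ n ≠ 0 := pow_ne_zero _ RatFunc.X_ne_zero
  have hx1 : RatFunc.C (algebraMap F K a) * RatFunc.X ^ n ≠ 0 := mul_ne_zero hCa hXn
  have hx2 : RatFunc.C (algebraMap F K b) * (RatFunc.X ^ n)⁻¹ ≠ 0 :=
    mul_ne_zero hCb (inv_ne_zero hXn)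
  have hd1 : (RatFunc.C (algebraMap F K a) * RatFunc.X ^ n).intDegree = (n : ℤ) := by
    rw [RatFunc.intDegree_mul hCa hXn, RatFunc.intDegree_C,
      myIntDegree_pow _ RatFunc.X_ne_zero, RatFunc.intDegree_X]
    ring
  have hd2 : (RatFunc.C (algebraMap F K b) * (RatFunc.X ^ n)⁻¹).intDegree = -(n : ℤ) := by
    rw [RatFunc.intDegree_mul hCb (inv_ne_zero hXn), RatFunc.intDegree_C,
      myIntDegree_inv _ hXn, myIntDegree_pow _ RatFunc.X_ne_zero, RatFunc.intDegree_X]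
    ring
  have hLdeg : (RatFunc.C (algebraMap F K a) * RatFunc.X ^ n
      + RatFunc.C (algebraMap F K b) * (RatFunc.X ^ n)⁻¹).intDegree = (n : ℤ) := by
    rw [myIntDegree_add_left hx1 hx2 (by rw [hd1, hd2]; omega), hd1]
  have hL0 : RatFunc.C (algebraMap F K a) * RatFunc.X ^ n
      + RatFunc.C (algebraMap F K b) * (RatFunc.X ^ n)⁻¹ ≠ 0 := by
    intro h0
    have heq := eq_neg_of_add_eq_zero_left h0
    have := congrArg RatFunc.intDegree heq
    rw [hd1, RatFunc.intDegree_neg, hd2] at this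
    omega
  -- now analyze h
  have hh0 : h ≠ 0 := by
    intro h0
    rw [h0, zero_pow hpp.ne_zero, sub_zero] at hEq
    exact hL0 hEq
  have hdegEq : (h ^ p - h).intDegree = n := by rw [← hEq]; exact hLdeg
  have hhp : (h ^ p).intDegree = p * h.intDegree := myIntDegree_pow _ hh0 p
  have hne : h ^ p - h ≠ 0 := by rw [← hEq]; exact hL0
  rcases lt_or_ge 0 h.intDegree with hpos | hneg
  · -- dominant term h^p
    have : (h ^ p - h).intDegree = p * h.intDegree := by
      rw [sub_eq_add_neg]
      rw [myIntDegree_add_left (pow_ne_zero _ hh0) (neg_ne_zero.mpr hh0) ?_, hhp]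
      rw [RatFunc.intDegree_neg, hhp]
      nlinarith [hpp.one_lt]
    rw [hdegEq] at this
    have : (p : ℤ) ∣ (n : ℤ) := ⟨h.intDegree, this⟩
    exact hpn (by exact_mod_cast this)
  · -- both terms have intDegree ≤ 0
    have hb1 : (h ^ p - h).intDegree ≤ max (h ^ p).intDegree (-h).intDegree := by
      rw [sub_eq_add_neg]
      exact RatFunc.intDegree_add_le (neg_ne_zero.mpr hh0) (by rwa [← sub_eq_add_neg])
    rw [RatFunc.intDegree_neg, hhp, hdegEq] at hb1
    have hple : (p : ℤ) * h.intDegree ≤ 0 := mul_nonpos_of_nonneg_of_nonpos (by positivity) hneg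
    omega
end
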